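/- arXiv:0803.3007 — 5 statements merged into one kernel-verified Lean document; each statement's English description precedes it below -/
import Mathlib

section
/- Let X and U be independent real random variables with E|X|^j < ∞ and E|U|^j < ∞ for all 0 ≤ j ≤ J, let W = X + U, and set ν_k = E(U^k) (so ν_0 = 1). Then for every 0 ≤ j ≤ J, E(X^j) = Σ_{k=0}^{j} C(j,k) · E(W^{j−k}) · P_k(ν_0, …, ν_k). -/
/-!
Write `a ⋆ b` for the binomial convolution `n ↦ ∑ₖ C(n,k) a(n-k) b(k)`; it is multiplication of
exponential generating functions, hence commutative and associative. By independence and the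
binomial theorem the moments of `W = X + U` are `ν ⋆ m_X`, and the recursion defining the `P_k`
says exactly that `ν ⋆ P(ν) = δ₀`. Hence `m_W ⋆ P(ν) = m_X ⋆ (ν ⋆ P(ν)) = m_X`.
-/

open MeasureTheory ProbabilityTheory Finset PowerSeries Nat

section BinomialConvolution

variable {R : Type*} [Field R]

def binomialConv (a b : ℕ → R) (n : ℕ) : R :=
  ∑ k ∈ range (n + 1), (n.choose k : R) * a (n - k) * b k

def egf (a : ℕ → R) : PowerSeries R :=
  PowerSeries.mk fun n => a n / n !

theorem binomialConv_eq_ite_of_recursion {x p : ℕ → R} (hx : x 0 ≠ 0) (hp0 : p 0 = (x 0)⁻¹)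
    (hrec : ∀ j, 1 ≤ j → x 0 * p j = -∑ k ∈ range j, (j.choose k : R) * x (j - k) * p k)
    (n : ℕ) : binomialConv x p n = if n = 0 then 1 else 0 := by
  rcases n with _ | n
  · simp [binomialConv, hp0, hx]
  · rw [binomialConv, sum_range_succ, choose_self, Nat.sub_self, cast_one, one_mul,
      hrec _ n.succ_pos]
    simp

variable [CharZero R]

theorem egf_injective : Function.Injective (egf (R := R)) := by
  intro a b h
  funext n
  have hn := congrArg (coeff n) h
  simp only [egf, coeff_mk] at hn
  exact (div_left_inj' (Nat.cast_ne_zero.2 n.factorial_ne_zero : (n ! : R) ≠ 0)).1 hn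

theorem egf_binomialConv (a b : ℕ → R) : egf (binomialConv a b) = egf a * egf b := by
  ext n
  rw [mul_comm, coeff_mul, Nat.sum_antidiagonal_eq_sum_range_succ
    (fun i j => coeff i (egf b) * coeff j (egf a)), egf, coeff_mk, binomialConv, sum_div]
  refine sum_congr rfl fun k hk => ?_
  have hkn : k ≤ n := Nat.lt_succ_iff.1 (mem_range.1 hk)
  simp only [egf, coeff_mk, Nat.cast_choose R hkn]
  field_simp [Nat.factorial_ne_zero]

theorem egf_mul_egf_eq_one {a b : ℕ → R}
    (h : ∀ n, binomialConv a b n = if n = 0 then 1 else 0) : egf a * egf b = 1 := by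
  rw [← egf_binomialConv]
  ext n
  rcases n with _ | n <;> simp [egf, h, coeff_one]

theorem binomialConv_binomialConv_of_inverse {a b c : ℕ → R}
    (h : ∀ n, binomialConv a c n = if n = 0 then 1 else 0) :
    binomialConv (binomialConv a b) c = b :=
  egf_injective <| by
    rw [egf_binomialConv, egf_binomialConv, mul_right_comm, egf_mul_egf_eq_one h, one_mul]

end BinomialConvolution

section Moments

variable {Ω : Type*} {mΩ : MeasurableSpace Ω} {μ : Measure Ω}

theorem integrable_pow_of_integrable_abs_pow {X : Ω → ℝ} (hX : AEStronglyMeasurable X μ) {i : ℕ}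
    (h : Integrable (fun ω => |X ω| ^ i) μ) : Integrable (X ^ i) μ :=
  (integrable_norm_iff (hX.pow i)).1 <| by
    simpa only [Pi.pow_apply, Real.norm_eq_abs, abs_pow] using h

theorem ProbabilityTheory.IndepFun.moment_add {X U : Ω → ℝ} (hXU : IndepFun X U μ) {m : ℕ}
    (hX : ∀ i ≤ m, Integrable (X ^ i) μ) (hU : ∀ i ≤ m, Integrable (U ^ i) μ) :
    moment (X + U) m μ = binomialConv (moment U · μ) (moment X · μ) m := by
  have hpow (i k : ℕ) : IndepFun (X ^ i) (U ^ k) μ :=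
    hXU.comp (measurable_id.pow_const i) (measurable_id.pow_const k)
  have hterm : ∀ k ∈ range (m + 1),
      Integrable (fun ω => X ω ^ k * U ω ^ (m - k) * (m.choose k : ℝ)) μ := by
    intro k hk
    have hkm : k ≤ m := Nat.lt_succ_iff.1 (mem_range.1 hk)
    exact ((hpow k (m - k)).integrable_mul (hX k hkm) (hU _ (m.sub_le k))).mul_const _
  calc moment (X + U) m μ
      = ∑ k ∈ range (m + 1), ∫ ω, X ω ^ k * U ω ^ (m - k) * (m.choose k : ℝ) ∂μ := by
        rw [moment_def, ← integral_finsetSum _ hterm]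
        simp only [Pi.add_apply, Pi.pow_apply, add_pow]
    _ = binomialConv (moment U · μ) (moment X · μ) m := by
        refine sum_congr rfl fun k hk => ?_
        have hkm : k ≤ m := Nat.lt_succ_iff.1 (mem_range.1 hk)
        rw [integral_mul_const]
        change μ[X ^ k * U ^ (m - k)] * _ = _
        rw [(hpow k (m - k)).integral_mul_eq_mul_integral
          (hX k hkm).aestronglyMeasurable (hU _ (m.sub_le k)).aestronglyMeasurable]
        simp only [moment_def]
        ring

end Moments

/-- For independent `X`, `U` with finite moments up to order `J`,
with `W = X + U` and `ν k = E(U^k)`, one has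
`E(X^j) = ∑_{k=0}^{j} C(j,k) E(W^{j-k}) P_k(ν_0, …, ν_k)` for all `j ≤ J`,
where the `P_j` satisfy the recursion `P_0(x_0) = x_0⁻¹` and, for `j ≥ 1`,
`x_0 P_j(x_0,…,x_j) = -∑_{k<j} C(j,k) x_{j-k} P_k(x_0,…,x_k)`. -/
theorem statement0
    {Ω : Type*} [MeasureSpace Ω] [IsProbabilityMeasure (ℙ : Measure Ω)]
    (J : ℕ) (X U : Ω → ℝ) (hX : Measurable X) (hU : Measurable U)
    (hindep : IndepFun X U ℙ)
    (hXmom : ∀ j ≤ J, Integrable (fun ω => |X ω| ^ j) ℙ)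
    (hUmom : ∀ j ≤ J, Integrable (fun ω => |U ω| ^ j) ℙ)
    (W : Ω → ℝ) (hW : ∀ ω, W ω = X ω + U ω)
    (ν : ℕ → ℝ) (hν : ∀ k, ν k = ∫ ω, (U ω) ^ k ∂ℙ)
    (P : ℕ → (ℕ → ℝ) → ℝ)
    (hP0 : ∀ x : ℕ → ℝ, P 0 x = (x 0)⁻¹)
    (hPrec : ∀ j : ℕ, 1 ≤ j → ∀ x : ℕ → ℝ,
      x 0 * P j x = -∑ k ∈ Finset.range j, (j.choose k : ℝ) * x (j - k) * P k x) :
    ∀ j ≤ J, (∫ ω, (X ω) ^ j ∂ℙ)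
      = ∑ k ∈ Finset.range (j + 1),
          (j.choose k : ℝ) * (∫ ω, (W ω) ^ (j - k) ∂ℙ) * P k ν := by
  intro j hj
  have hν_moment : ν = (moment U · ℙ) := funext hν
  have hW_moment (m : ℕ) (hm : m ≤ J) :
      ∫ ω, W ω ^ m ∂ℙ = binomialConv ν (moment X · ℙ) m := by
    rw [hν_moment, ← hindep.moment_add
      (fun i hi => integrable_pow_of_integrable_abs_pow hX.aestronglyMeasurable
        (hXmom i (hi.trans hm)))
      (fun i hi => integrable_pow_of_integrable_abs_pow hU.aestronglyMeasurable
        (hUmom i (hi.trans hm)))]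
    simp only [moment_def, hW, Pi.add_apply, Pi.pow_apply]
  have hP_inverse : ∀ n, binomialConv ν (P · ν) n = if n = 0 then 1 else 0 :=
    binomialConv_eq_ite_of_recursion (by simp [hν]) (hP0 ν) fun n hn => hPrec n hn ν
  calc ∫ ω, X ω ^ j ∂ℙ
      = binomialConv (binomialConv ν (moment X · ℙ)) (P · ν) j :=
        congrFun (binomialConv_binomialConv_of_inverse (b := (moment X · ℙ)) hP_inverse) j |>.symm
    _ = _ := sum_congr rfl fun k hk => by
        rw [hW_moment (j - k) ((j.sub_le k).trans hj)]
end

section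
/- In the errors-in-variables model, suppose E|g(X)| < ∞ and E(|ε|) < ∞. Then for every t ∈ ℝ, E(Y e^{itW}) = E(g(X) e^{itX}) · f_U^{Ft}(t). Consequently, whenever f_U^{Ft}(t) ≠ 0, the estimator ψ̂(t) = (n f_U^{Ft}(t))^{−1} Σ_{j=1}^{n} Y_j e^{itW_j}, computed from i.i.d. copies (W_j, Y_j) of (W, Y), is an unbiased estimator of ψ(t) = E(g(X) e^{itX}). -/
/-!
Write `e_t(x) = exp (i t x)`. Since `W = X + U` and `Y = g(X) + ε`,
`Y e_t(W) = g(X) e_t(X) · e_t(U) + ε · e_t(X + U)`. The first term factorises in expectation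
because `X` and `U` are independent; the second has expectation zero because `e_t(X + U)` is a
bounded function of `(X, U)`, so it can be pulled out of `E(ε | X, U) = 0`. Each summand of
`ψ̂(t)` has the law of `Y e_t(W)`, which gives unbiasedness.
-/

open MeasureTheory ProbabilityTheory Complex

lemma Complex.norm_exp_I_mul_ofReal_mul_ofReal (t x : ℝ) : ‖exp (I * t * x)‖ = 1 := by
  rw [norm_exp]
  simp

lemma MeasureTheory.Integrable.ofReal_mul_exp_I_mul {Ω : Type*} [MeasurableSpace Ω]
    {μ : Measure Ω} {f φ : Ω → ℝ} (hf : Integrable f μ) (hφ : AEMeasurable φ μ) (t : ℝ) :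
    Integrable (fun ω => (f ω : ℂ) * exp (I * t * φ ω)) μ :=
  hf.ofReal.mul_bdd (by fun_prop) (c := 1)
    (ae_of_all _ fun ω => (norm_exp_I_mul_ofReal_mul_ofReal t (φ ω)).le)

lemma MeasureTheory.integral_smul_eq_zero_of_condExp_eq_zero {Ω E : Type*}
    {m mΩ : MeasurableSpace Ω} {μ : Measure[mΩ] Ω}
    [NormedAddCommGroup E] [NormedSpace ℝ E] [CompleteSpace E]
    (hm : m ≤ mΩ) [SigmaFinite (μ.trim hm)] {f : Ω → ℝ} {g : Ω → E}
    (hf : Integrable f μ) (hfg : Integrable (fun ω => f ω • g ω) μ)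
    (hg : AEStronglyMeasurable[m] g μ)
    (hcond : μ[f | m] =ᵐ[μ] 0) :
    ∫ ω, f ω • g ω ∂μ = 0 := by
  have hzero : μ[f • g | m] =ᵐ[μ] 0 := by
    filter_upwards [condExp_smul_of_aestronglyMeasurable_right hf hfg hg, hcond] with ω h h0
    simp [h, h0]
  calc ∫ ω, f ω • g ω ∂μ = ∫ ω, μ[f • g | m] ω ∂μ := (integral_condExp hm).symm
    _ = 0 := by simp [integral_congr_ae hzero]

lemma ProbabilityTheory.IndepFun.integral_mul_exp_I_mul_add {Ω : Type*} [MeasurableSpace Ω]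
    {μ : Measure Ω} {X U : Ω → ℝ} (hXU : IndepFun X U μ) (hX : AEMeasurable X μ)
    (hU : AEMeasurable U μ) {h : ℝ → ℂ} (hh : AEStronglyMeasurable h (μ.map X)) (t : ℝ) :
    ∫ ω, h (X ω) * exp (I * t * (X ω + U ω : ℝ)) ∂μ
      = (∫ ω, h (X ω) * exp (I * t * X ω) ∂μ) * ∫ ω, exp (I * t * U ω) ∂μ := by
  have hsplit : ∀ ω, h (X ω) * exp (I * t * (X ω + U ω : ℝ))
      = (h (X ω) * exp (I * t * X ω)) * exp (I * t * U ω) := fun ω => by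
    rw [mul_assoc (h (X ω)), ← exp_add]
    congr 2
    push_cast
    ring
  simp_rw [hsplit]
  exact hXU.integral_fun_comp_mul_comp (X := X) (Y := U) (f := fun x => h x * exp (I * t * x))
    (g := fun u => exp (I * t * u)) hX hU (by fun_prop) (by fun_prop)

theorem integral_add_mul_exp_I_mul_add_eq_of_condExp_eq_zero {Ω : Type*} [MeasurableSpace Ω]
    {μ : Measure Ω} [IsFiniteMeasure μ] {X U ε : Ω → ℝ} {g : ℝ → ℝ}
    (hX : Measurable X) (hU : Measurable U) (hg : Measurable g) (hXU : IndepFun X U μ)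
    (hgX : Integrable (fun ω => g (X ω)) μ) (hε : Integrable ε μ)
    (hcond : μ[ε | MeasurableSpace.comap (fun ω => (X ω, U ω)) inferInstance] =ᵐ[μ] 0) (t : ℝ) :
    ∫ ω, ((g (X ω) + ε ω : ℝ) : ℂ) * exp (I * t * (X ω + U ω : ℝ)) ∂μ
      = (∫ ω, (g (X ω) : ℂ) * exp (I * t * X ω) ∂μ) * ∫ ω, exp (I * t * U ω) ∂μ := by
  have hXaddU : Measurable fun ω => X ω + U ω := hX.add hU
  have hnoise : ∫ ω, (ε ω : ℂ) * exp (I * t * (X ω + U ω : ℝ)) ∂μ = 0 := by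
    have hmeas : AEStronglyMeasurable[MeasurableSpace.comap (fun ω => (X ω, U ω)) inferInstance]
        (fun ω => exp (I * t * (X ω + U ω : ℝ))) μ :=
      ((by fun_prop : Measurable fun p : ℝ × ℝ => exp (I * t * (p.1 + p.2 : ℝ))).comp
        (comap_measurable _)).aestronglyMeasurable
    simpa only [real_smul] using integral_smul_eq_zero_of_condExp_eq_zero
      (hX.prodMk hU).comap_le hε
      (by simpa only [← real_smul] using hε.ofReal_mul_exp_I_mul hXaddU.aemeasurable t)
      hmeas hcond
  have hsplit : (fun ω => ((g (X ω) + ε ω : ℝ) : ℂ) * exp (I * t * (X ω + U ω : ℝ)))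
      = fun ω => (g (X ω) : ℂ) * exp (I * t * (X ω + U ω : ℝ))
        + (ε ω : ℂ) * exp (I * t * (X ω + U ω : ℝ)) := by
    ext ω
    rw [ofReal_add, add_mul]
  rw [hsplit, integral_add (hgX.ofReal_mul_exp_I_mul hXaddU.aemeasurable t)
      (hε.ofReal_mul_exp_I_mul hXaddU.aemeasurable t), hnoise, add_zero]
  exact hXU.integral_mul_exp_I_mul_add hX.aemeasurable hU.aemeasurable
    (by fun_prop : Measurable fun x => (g x : ℂ)).aestronglyMeasurable t

lemma integral_inv_mul_sum_eq_of_integral_eq {Ω : Type*} [MeasurableSpace Ω] {μ : Measure Ω}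
    {Z : ℕ → Ω → ℂ} {a c : ℂ} {n : ℕ} (hn : n ≠ 0) (ha : a ≠ 0)
    (hZ : ∀ j, Integrable (Z j) μ) (hZc : ∀ j, ∫ ω, Z j ω ∂μ = c * a) :
    ∫ ω, ((n : ℂ) * a)⁻¹ * ∑ j ∈ Finset.range n, Z j ω ∂μ = c := by
  rw [integral_const_mul, integral_finsetSum _ fun j _ => hZ j]
  simp only [hZc, Finset.sum_const, Finset.card_range, nsmul_eq_mul]
  field_simp

/-- In the errors-in-variables model, if `E|g(X)| < ∞` and `E|ε| < ∞`,
then `E(Y e^{itW}) = E(g(X) e^{itX}) f_U^{Ft}(t)` for every `t`. Consequently,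
whenever `f_U^{Ft}(t) ≠ 0`, the estimator
`ψ̂(t) = (n f_U^{Ft}(t))⁻¹ ∑_{j=1}^n Y_j e^{itW_j}`, computed from i.i.d. copies
`(W_j, Y_j)` of `(W, Y)`, is unbiased for `ψ(t) = E(g(X) e^{itX})`. -/
theorem statement6
    {Ω : Type*} [MeasureSpace Ω] [IsProbabilityMeasure (ℙ : Measure Ω)]
    (X U ε : Ω → ℝ) (g : ℝ → ℝ)
    (hX : Measurable X) (hU : Measurable U) (hε : Measurable ε) (hg : Measurable g)
    (hindep : IndepFun X U ℙ)
    (hcond : ℙ[ε | MeasurableSpace.comap (fun ω => (X ω, U ω)) inferInstance] =ᵐ[ℙ] 0)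
    (hgint : Integrable (fun ω => |g (X ω)|) ℙ)
    (hεint : Integrable (fun ω => |ε ω|) ℙ)
    (Y W : Ω → ℝ) (hY : ∀ ω, Y ω = g (X ω) + ε ω) (hW : ∀ ω, W ω = X ω + U ω)
    (fUFt : ℝ → ℂ) (hfUFt : ∀ t, fUFt t = ∫ ω, Complex.exp (Complex.I * t * U ω) ∂ℙ)
    (ψ : ℝ → ℂ) (hψ : ∀ t, ψ t = ∫ ω, (g (X ω) : ℂ) * Complex.exp (Complex.I * t * X ω) ∂ℙ)
    (Ws Ys : ℕ → Ω → ℝ)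
    (hWsmeas : ∀ j, Measurable (Ws j)) (hYsmeas : ∀ j, Measurable (Ys j))
    (hiid : ∀ j, Measure.map (fun ω => (Ws j ω, Ys j ω)) ℙ
              = Measure.map (fun ω => (W ω, Y ω)) ℙ) :
    (∀ t : ℝ,
      (∫ ω, (Y ω : ℂ) * Complex.exp (Complex.I * t * W ω) ∂ℙ) = ψ t * fUFt t) ∧
    (∀ t : ℝ, fUFt t ≠ 0 → ∀ n : ℕ, 1 ≤ n →
      (∫ ω, ((n : ℂ) * fUFt t)⁻¹
          * ∑ j ∈ Finset.range n, (Ys j ω : ℂ) * Complex.exp (Complex.I * t * Ws j ω) ∂ℙ)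
        = ψ t) := by
  obtain rfl : Y = fun ω => g (X ω) + ε ω := funext hY
  obtain rfl : W = fun ω => X ω + U ω := funext hW
  have hgX : Integrable (fun ω => g (X ω)) ℙ :=
    (integrable_norm_iff (hg.comp hX).aestronglyMeasurable).mp hgint
  have hεi : Integrable ε ℙ := (integrable_norm_iff hε.aestronglyMeasurable).mp hεint
  have hmean : ∀ t : ℝ,
      ∫ ω, ((g (X ω) + ε ω : ℝ) : ℂ) * exp (I * t * (X ω + U ω : ℝ)) ∂ℙ = ψ t * fUFt t :=
    fun t => by
      rw [hψ, hfUFt]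
      exact integral_add_mul_exp_I_mul_add_eq_of_condExp_eq_zero hX hU hg hindep hgX hεi hcond t
  refine ⟨hmean, fun t ht n hn => ?_⟩
  have hcopy : ∀ j, IdentDistrib (fun ω => (Ys j ω : ℂ) * exp (I * t * Ws j ω))
      (fun ω => ((g (X ω) + ε ω : ℝ) : ℂ) * exp (I * t * (X ω + U ω : ℝ))) ℙ ℙ := fun j =>
    (IdentDistrib.mk (by fun_prop) (by fun_prop) (hiid j)).comp
      (u := fun p : ℝ × ℝ => (p.2 : ℂ) * exp (I * t * p.1)) (by fun_prop)
  refine integral_inv_mul_sum_eq_of_integral_eq (by omega) ht (fun j => ?_) fun j => ?_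
  · exact (hcopy j).integrable_iff.mpr
      ((hgX.add hεi).ofReal_mul_exp_I_mul (hX.add hU).aemeasurable t)
  · rw [(hcopy j).integral_eq, hmean]
end

section
/- Let X and U be independent real random variables with E|X|^k < ∞ and E|U|^k < ∞, and suppose the characteristic function f_U^{Ft}(t) = E(e^{itU}) is nowhere zero. Let W = X + U and define φ_r(t) = f_U^{Ft}(t) · (i^{−1} d/dt)^r (f_U^{Ft}(t)^{−1}). Then for every t ∈ ℝ, Σ_{ℓ=0}^{k} C(k,ℓ) · E(W^ℓ e^{itW}) · φ_{k−ℓ}(t) = f_U^{Ft}(t) · (i^{−1} d/dt)^k f_X^{Ft}(t) = f_U^{Ft}(t) · E(X^k e^{itX}), where f_X^{Ft}(t) = E(e^{itX}). -/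
open MeasureTheory ProbabilityTheory Complex

/-!
Independence makes characteristic functions multiplicative, `f_W = f_X f_U`, so
`f_X = f_W · f_U⁻¹` and Leibniz's rule expresses `f_X^{(k)}` through the derivatives of `f_W` and
of `f_U⁻¹`. A moment of order `k` makes a characteristic function `C^k`, with
`f_Y^{(ℓ)}(t) = i^ℓ E(Y^ℓ e^{itY})` for `ℓ ≤ k`; this turns the Leibniz sum into the stated one and
gives the second identity.
-/

lemma memLp_of_integrable_abs_pow {Ω : Type*} {mΩ : MeasurableSpace Ω} {μ : Measure Ω}
    {Y : Ω → ℝ} {k : ℕ} (hY : AEStronglyMeasurable Y μ)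
    (h : Integrable (fun ω => |Y ω| ^ k) μ) : MemLp Y k μ := by
  rcases eq_or_ne k 0 with rfl | hk
  · simpa using hY
  rw [← integrable_norm_rpow_iff hY (by exact_mod_cast hk) (ENNReal.natCast_ne_top k)]
  simpa [Real.rpow_natCast] using h

section CharFun

variable {Ω : Type*} {mΩ : MeasurableSpace Ω} {P : Measure Ω} {Y : Ω → ℝ}

lemma charFun_map_eq_integral (hY : AEMeasurable Y P) (t : ℝ) :
    charFun (P.map Y) t = ∫ ω, exp (I * t * Y ω) ∂P := by
  rw [charFun_apply_real, integral_map hY (by fun_prop)]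
  simp only [mul_comm I, mul_assoc]

variable [IsFiniteMeasure P]

lemma contDiff_charFun_map (hY : AEMeasurable Y P) {n : ℕ} (hn : MemLp Y n P) :
    ContDiff ℝ n (charFun (P.map Y)) :=
  contDiff_charFun ((memLp_map_measure_iff aestronglyMeasurable_id hY).2 hn)

lemma iteratedDeriv_charFun_map (hY : AEMeasurable Y P) {n : ℕ} (hn : MemLp Y n P) (t : ℝ) :
    iteratedDeriv n (charFun (P.map Y)) t = I ^ n * ∫ ω, (Y ω : ℂ) ^ n * exp (I * t * Y ω) ∂P := by
  rw [iteratedDeriv_charFun ((memLp_map_measure_iff aestronglyMeasurable_id hY).2 hn),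
    integral_map hY (by fun_prop)]
  simp only [mul_comm I, mul_assoc]

end CharFun

lemma inv_pow_mul_pow_of_le {G : Type*} [GroupWithZero G] {a : G} (ha : a ≠ 0) {k l : ℕ}
    (hl : l ≤ k) : a⁻¹ ^ k * a ^ l = a⁻¹ ^ (k - l) := by
  rw [pow_sub₀ _ (inv_ne_zero ha) hl, inv_pow, inv_pow, inv_inv]

lemma iteratedDeriv_eq_sum_iteratedDeriv_mul_inv {𝕜 𝕜' : Type*} [NontriviallyNormedField 𝕜]
    [NormedField 𝕜'] [NormedAlgebra 𝕜 𝕜'] {f g : 𝕜 → 𝕜'} {n : ℕ} {x : 𝕜}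
    (hf : ContDiffAt 𝕜 n f x) (hg : ContDiffAt 𝕜 n g x) (hg0 : ∀ y, g y ≠ 0) :
    iteratedDeriv n f x = ∑ i ∈ Finset.range (n + 1),
      n.choose i * iteratedDeriv i (f * g) x * iteratedDeriv (n - i) (fun y => (g y)⁻¹) x := by
  have hfg : f = fun y => (f * g) y * (g y)⁻¹ :=
    funext fun y => (mul_inv_cancel_right₀ (hg0 y) _).symm
  conv_lhs => rw [hfg]
  exact iteratedDeriv_fun_mul (hf.mul hg) (hg.inv (hg0 x))

/-- For independent `X`, `U` with `E|X|^k < ∞`, `E|U|^k < ∞`, and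
nowhere-vanishing characteristic function `f_U^{Ft}`, with `W = X + U` and
`φ_r(t) = f_U^{Ft}(t) (i⁻¹ d/dt)^r (f_U^{Ft}(t)⁻¹)`, one has, for every `t`,
`∑_{ℓ=0}^k C(k,ℓ) E(W^ℓ e^{itW}) φ_{k-ℓ}(t) = f_U^{Ft}(t) (i⁻¹ d/dt)^k f_X^{Ft}(t)
 = f_U^{Ft}(t) E(X^k e^{itX})`. -/
theorem statement7
    {Ω : Type*} [MeasureSpace Ω] [IsProbabilityMeasure (ℙ : Measure Ω)]
    (k : ℕ) (X U : Ω → ℝ) (hX : Measurable X) (hU : Measurable U)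
    (hindep : IndepFun X U ℙ)
    (hXmom : Integrable (fun ω => |X ω| ^ k) ℙ)
    (hUmom : Integrable (fun ω => |U ω| ^ k) ℙ)
    (W : Ω → ℝ) (hW : ∀ ω, W ω = X ω + U ω)
    (fUFt : ℝ → ℂ) (hfUFt : ∀ t, fUFt t = ∫ ω, Complex.exp (Complex.I * t * U ω) ∂ℙ)
    (hnz : ∀ t, fUFt t ≠ 0)
    (fXFt : ℝ → ℂ) (hfXFt : ∀ t, fXFt t = ∫ ω, Complex.exp (Complex.I * t * X ω) ∂ℙ)
    (φ : ℕ → ℝ → ℂ)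
    (hφ : ∀ r t, φ r t
      = fUFt t * (Complex.I⁻¹) ^ r * iteratedDeriv r (fun s => (fUFt s)⁻¹) t) :
    ∀ t : ℝ,
      (∑ ℓ ∈ Finset.range (k + 1),
          (k.choose ℓ : ℂ) * (∫ ω, ((W ω : ℂ)) ^ ℓ * Complex.exp (Complex.I * t * W ω) ∂ℙ)
            * φ (k - ℓ) t)
        = fUFt t * (Complex.I⁻¹) ^ k * iteratedDeriv k fXFt t ∧
      fUFt t * (Complex.I⁻¹) ^ k * iteratedDeriv k fXFt t
        = fUFt t * ∫ ω, ((X ω : ℂ)) ^ k * Complex.exp (Complex.I * t * X ω) ∂ℙ := by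
  intro t
  have hXk := memLp_of_integrable_abs_pow hX.aestronglyMeasurable hXmom
  have hUk := memLp_of_integrable_abs_pow hU.aestronglyMeasurable hUmom
  have hW' : W = X + U := funext hW
  have hWm : Measurable W := hW' ▸ hX.add hU
  have hWk : MemLp W k ℙ := hW' ▸ hXk.add hUk
  have hfX : fXFt = charFun (Measure.map X ℙ) :=
    funext fun s => (hfXFt s).trans (charFun_map_eq_integral hX.aemeasurable s).symm
  have hfU : fUFt = charFun (Measure.map U ℙ) :=
    funext fun s => (hfUFt s).trans (charFun_map_eq_integral hU.aemeasurable s).symm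
  have hfW : fXFt * fUFt = charFun (Measure.map W ℙ) := by
    rw [hW', hfX, hfU, hindep.charFun_map_add_eq_mul hX.aemeasurable hU.aemeasurable]
  have hcX : ContDiff ℝ k fXFt := hfX ▸ contDiff_charFun_map hX.aemeasurable hXk
  have hcU : ContDiff ℝ k fUFt := hfU ▸ contDiff_charFun_map hU.aemeasurable hUk
  have hdX : iteratedDeriv k fXFt t = I ^ k * ∫ ω, (X ω : ℂ) ^ k * exp (I * t * X ω) ∂ℙ :=
    hfX ▸ iteratedDeriv_charFun_map hX.aemeasurable hXk t
  constructor
  · rw [iteratedDeriv_eq_sum_iteratedDeriv_mul_inv hcX.contDiffAt hcU.contDiffAt hnz,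
      Finset.mul_sum, hfW]
    refine Finset.sum_congr rfl fun l hl => ?_
    have hlk : l ≤ k := Nat.lt_succ_iff.mp (Finset.mem_range.mp hl)
    rw [hφ, iteratedDeriv_charFun_map hWm.aemeasurable (hWk.mono_exponent (by exact_mod_cast hlk)),
      ← inv_pow_mul_pow_of_le I_ne_zero hlk]
    ring
  · rw [hdX, mul_assoc, ← mul_assoc _ (I ^ k), inv_pow_mul_pow_of_le I_ne_zero le_rfl,
      Nat.sub_self, pow_zero, one_mul]
end

section
/- Define K : ℝ → ℝ by K(x) = 48 cos(x) (1 − 15 x^{−2}) (π x^4)^{−1} − 144 sin(x) (2 − 5 x^{−2}) (π x^5)^{−1} for x ≠ 0 (extended continuously at 0). Then K is integrable and its Fourier transform satisfies K^{Ft}(t) = ∫ e^{itx} K(x) dx = (1 − t²)³ for |t| ≤ 1 and K^{Ft}(t) = 0 for |t| > 1. In particular, ∫ K(x) dx = 1. -/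
/-!
Away from `0`, `K` is `(2π)⁻¹ ∫ e^{-iux} g(u) du` for the bump `g(t) = (1 - t²)₊³`: on `[-1, 1]`
the sine part of the integrand is odd, and the cosine part has an elementary antiderivative.
`K` is continuous and `O(x⁻²)`, hence integrable, so Fourier inversion gives `K^{Ft} = g`;
at `t = 0` this is `∫ K = g 0 = 1`.
-/

open MeasureTheory Real FourierTransform Filter Set

section AngularFourier

variable {E : Type*} [NormedAddCommGroup E] [NormedSpace ℂ E]

theorem fourier_comp_two_pi_mul (g : ℝ → E) (x : ℝ) :
    𝓕 (fun ξ => g (2 * π * ξ)) x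
      = (2 * π)⁻¹ • ∫ u : ℝ, Complex.exp (-(Complex.I * u * x)) • g u := by
  have h := Measure.integral_comp_mul_left
    (fun u : ℝ => Complex.exp (-(Complex.I * u * x)) • g u) (2 * π)
  rw [abs_of_pos (inv_pos.mpr two_pi_pos)] at h
  rw [Real.fourier_real_eq_integral_exp_smul, ← h]
  congr 1 with ξ
  congr 2
  push_cast
  ring

variable [CompleteSpace E]

theorem integral_exp_I_mul_smul_fourier_comp_two_pi_mul {g : ℝ → E} (hg : Continuous g)
    (hgi : Integrable g) (hFi : Integrable (𝓕 fun ξ => g (2 * π * ξ))) (t : ℝ) :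
    ∫ x : ℝ, Complex.exp (Complex.I * t * x) • 𝓕 (fun ξ => g (2 * π * ξ)) x = g t := by
  have h := congrFun ((hg.comp (continuous_const_mul (2 * π))).fourierInv_fourier_eq
    (hgi.comp_mul_left' two_pi_pos.ne') hFi) (t / (2 * π))
  rw [Real.fourierInv_eq', Function.comp_def] at h
  convert h using 3 with x
  · push_cast [Real.inner_apply]
    field_simp
  · field_simp

end AngularFourier

theorem intervalIntegral.integral_eq_zero_of_odd {E : Type*} [NormedAddCommGroup E]
    [NormedSpace ℝ E] {f : ℝ → E} (hf : ∀ x, f (-x) = -f x) (a : ℝ) :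
    ∫ x in -a..a, f x = 0 := by
  have h := intervalIntegral.integral_comp_neg (a := -a) (b := a) f
  simp_rw [neg_neg, hf, intervalIntegral.integral_neg] at h
  have : IsAddTorsionFree E := .of_isTorsionFree ℝ E
  exact self_eq_neg.mp h.symm

theorem integral_one_sub_sq_pow_three_mul_cos {x : ℝ} (hx : x ≠ 0) :
    ∫ u in (-1 : ℝ)..1, (1 - u ^ 2) ^ 3 * cos (u * x)
      = 2 * ((720 - 288 * x ^ 2) * sin x + (48 * x ^ 3 - 720 * x) * cos x) / x ^ 7 := by
  -- the antiderivative comes from integrating by parts six times, differentiating `(1 - u²)³`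
  have hF (u : ℝ) : HasDerivAt (fun u => (sin (u * x) * ((x ^ 6 + 6 * x ^ 4 + 72 * x ^ 2 + 720)
        - (3 * x ^ 6 + 36 * x ^ 4 + 360 * x ^ 2) * u ^ 2 + (3 * x ^ 6 + 30 * x ^ 4) * u ^ 4
        - x ^ 6 * u ^ 6)
      + cos (u * x) * ((12 * x ^ 5 + 120 * x ^ 3) * u ^ 3 - 6 * x ^ 5 * u ^ 5
        - (6 * x ^ 5 + 72 * x ^ 3 + 720 * x) * u)) / x ^ 7)
      ((1 - u ^ 2) ^ 3 * cos (u * x)) u := by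
    refine ((((hasDerivAt_mul_const x).sin.mul ((((hasDerivAt_const u _).sub
      ((hasDerivAt_pow 2 u).const_mul _)).add ((hasDerivAt_pow 4 u).const_mul _)).sub
      ((hasDerivAt_pow 6 u).const_mul _))).add ((hasDerivAt_mul_const x).cos.mul
      ((((hasDerivAt_pow 3 u).const_mul _).sub ((hasDerivAt_pow 5 u).const_mul _)).sub
      ((hasDerivAt_id u).const_mul _)))).div_const _).congr_deriv ?_
    norm_num
    field_simp
    ring
  rw [intervalIntegral.integral_eq_sub_of_hasDerivAt (fun u _ => hF u)
    ((by fun_prop : Continuous _).intervalIntegrable _ _)]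
  simp only [sin_neg, cos_neg, neg_mul, one_mul]
  field_simp
  ring

noncomputable def cubicBump (t : ℝ) : ℝ := max (1 - t ^ 2) 0 ^ 3

theorem cubicBump_eq_ite (t : ℝ) : cubicBump t = if |t| ≤ 1 then (1 - t ^ 2) ^ 3 else 0 := by
  have h : |t| ≤ 1 ↔ 0 ≤ 1 - t ^ 2 := by rw [sub_nonneg, sq_le_one_iff_abs_le_one]
  split_ifs with ht
  · rw [cubicBump, max_eq_left (h.mp ht)]
  · rw [cubicBump, max_eq_right (not_le.mp (h.not.mp ht)).le, zero_pow three_ne_zero]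

theorem support_cubicBump : Function.support cubicBump ⊆ Ioo (-1) 1 := by
  intro t ht
  rw [Function.mem_support, cubicBump_eq_ite] at ht
  split_ifs at ht with h
  · rw [mem_Ioo, ← abs_lt]
    refine h.lt_of_ne fun h1 => ht ?_
    rw [← sq_abs, h1]
    norm_num
  · exact absurd rfl ht

@[fun_prop]
theorem continuous_cubicBump : Continuous cubicBump := by
  unfold cubicBump; fun_prop

theorem integrable_cubicBump : Integrable cubicBump :=
  continuous_cubicBump.integrable_of_hasCompactSupport
    (.of_support_subset_isCompact isCompact_Icc (support_cubicBump.trans Ioo_subset_Icc_self))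

theorem integral_exp_neg_smul_cubicBump {x : ℝ} (hx : x ≠ 0) :
    ∫ u : ℝ, Complex.exp (-(Complex.I * u * x)) • (cubicBump u : ℂ)
      = ((2 * ((720 - 288 * x ^ 2) * sin x + (48 * x ^ 3 - 720 * x) * cos x) / x ^ 7 : ℝ) : ℂ) := by
  have hsupp : Function.support
      (fun u : ℝ => Complex.exp (-(Complex.I * u * x)) • (cubicBump u : ℂ)) ⊆ Ioc (-1) 1 := by
    refine fun u hu => Ioo_subset_Ioc_self (support_cubicBump fun h => hu ?_)
    simp [h]
  have hsplit : ∀ u ∈ uIcc (-1 : ℝ) 1,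
      Complex.exp (-(Complex.I * u * x)) • (cubicBump u : ℂ)
        = (((1 - u ^ 2) ^ 3 * cos (u * x) : ℝ) : ℂ)
          - (((1 - u ^ 2) ^ 3 * sin (u * x) : ℝ) : ℂ) * Complex.I := by
    intro u hu
    rw [uIcc_of_le (by norm_num), mem_Icc, ← abs_le] at hu
    have harg : -(Complex.I * u * x) = ((-(u * x) : ℝ) : ℂ) * Complex.I := by push_cast; ring
    rw [cubicBump_eq_ite, if_pos hu, smul_eq_mul, harg, Complex.exp_mul_I,
      ← Complex.ofReal_cos, ← Complex.ofReal_sin, cos_neg, sin_neg]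
    push_cast
    ring
  rw [← intervalIntegral.integral_eq_integral_of_support_subset hsupp,
    intervalIntegral.integral_congr hsplit, intervalIntegral.integral_sub,
    intervalIntegral.integral_mul_const, intervalIntegral.integral_ofReal,
    intervalIntegral.integral_ofReal, integral_one_sub_sq_pow_three_mul_cos hx,
    intervalIntegral.integral_eq_zero_of_odd (fun u => by rw [neg_sq, neg_mul, sin_neg, mul_neg])]
  · simp
  all_goals exact (by fun_prop : Continuous _).intervalIntegrable _ _

noncomputable def kernelFormula (x : ℝ) : ℝ :=
  48 * cos x * (1 - 15 * (x ^ 2)⁻¹) * (π * x ^ 4)⁻¹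
    - 144 * sin x * (2 - 5 * (x ^ 2)⁻¹) * (π * x ^ 5)⁻¹

theorem abs_kernelFormula_le {x : ℝ} (hx : 1 ≤ |x|) :
    |kernelFormula x| ≤ 736 * (1 + x ^ 2)⁻¹ := by
  have hx2 : 1 ≤ x ^ 2 := by rw [← sq_abs]; exact one_le_pow₀ hx
  set y := (x ^ 2)⁻¹ with hy
  have hy0 : 0 < y := inv_pos.mpr (by linarith)
  have hy1 : y ≤ 1 := inv_le_one_of_one_le₀ hx2
  have h4 : |(π * x ^ 4)⁻¹| = y ^ 2 / π := by
    rw [abs_of_nonneg (by positivity), hy]; field_simp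
  have h5 : |(π * x ^ 5)⁻¹| ≤ y ^ 2 / π := by
    rw [abs_inv, abs_mul, abs_of_pos pi_pos, abs_pow, hy, ← sq_abs x]
    rw [inv_le_iff_one_le_mul₀ (by positivity)]
    field_simp
    nlinarith [pow_le_pow_right₀ hx (show 4 ≤ 5 by norm_num)]
  have hc : |1 - 15 * y| ≤ 14 := abs_le.mpr ⟨by linarith, by linarith⟩
  have hs : |2 - 5 * y| ≤ 3 := abs_le.mpr ⟨by linarith, by linarith⟩
  calc |kernelFormula x|
      ≤ 48 * 1 * 14 * (y ^ 2 / π) + 144 * 1 * 3 * (y ^ 2 / π) := by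
        refine (abs_sub _ _).trans (add_le_add ?_ ?_) <;>
          simp only [abs_mul, abs_of_pos (by norm_num : (0 : ℝ) < 48),
            abs_of_pos (by norm_num : (0 : ℝ) < 144), h4]
        · gcongr; exact abs_cos_le_one x
        · gcongr; exact abs_sin_le_one x
    _ ≤ 368 * y := by
        rw [← add_mul, mul_div_assoc', div_le_iff₀ pi_pos]
        nlinarith [pi_gt_three]
    _ ≤ 736 * (1 + x ^ 2)⁻¹ := by
        rw [hy, ← div_eq_mul_inv, ← div_eq_mul_inv, div_le_div_iff₀ (by linarith) (by linarith)]
        linarith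

theorem fourier_cubicBump_comp_two_pi_mul {x : ℝ} (hx : x ≠ 0) :
    𝓕 (fun ξ => (cubicBump (2 * π * ξ) : ℂ)) x = kernelFormula x := by
  rw [fourier_comp_two_pi_mul (fun u => (cubicBump u : ℂ)), integral_exp_neg_smul_cubicBump hx,
    Complex.real_smul, ← Complex.ofReal_mul, Complex.ofReal_inj, kernelFormula]
  field_simp
  ring

theorem integrable_of_eq_kernelFormula {K : ℝ → ℝ} (hKcont : Continuous K)
    (hK : ∀ x ≠ 0, K x = kernelFormula x) : Integrable K := by
  refine hKcont.locallyIntegrable.integrable_of_isBigO_cocompact (g := fun x => (1 + x ^ 2)⁻¹)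
    (.of_bound 736 ?_) (integrable_inv_one_add_sq.integrableAtFilter _)
  filter_upwards [tendsto_norm_cocompact_atTop.eventually_ge_atTop 1] with x hx
  rw [Real.norm_eq_abs] at hx
  rw [Real.norm_eq_abs, Real.norm_eq_abs, abs_of_pos (a := (1 + x ^ 2)⁻¹) (by positivity),
    hK x (abs_pos.mp (one_pos.trans_le hx))]
  exact abs_kernelFormula_le hx

theorem ofReal_comp_eq_fourier_cubicBump {K : ℝ → ℝ} (hKcont : Continuous K)
    (hK : ∀ x ≠ 0, K x = kernelFormula x) :
    (fun x => (K x : ℂ)) = 𝓕 fun ξ => (cubicBump (2 * π * ξ) : ℂ) :=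
  Continuous.ext_on (dense_compl_singleton 0) (by fun_prop)
    (VectorFourier.fourierIntegral_continuous continuous_fourierChar (innerSL ℝ).continuous₂
      (Integrable.comp_mul_left' (g := fun u => (cubicBump u : ℂ)) integrable_cubicBump.ofReal
        two_pi_pos.ne'))
    fun x hx => by rw [hK x hx, fourier_cubicBump_comp_two_pi_mul hx]

/-- The kernel
`K(x) = 48 cos x (1 - 15 x⁻²)(π x⁴)⁻¹ - 144 sin x (2 - 5 x⁻²)(π x⁵)⁻¹` (for
`x ≠ 0`, extended continuously at `0`) is integrable, its Fourier transform is
`K^{Ft}(t) = (1 - t²)³` for `|t| ≤ 1` and `0` for `|t| > 1`, and `∫ K = 1`. -/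
theorem statement11
    (K : ℝ → ℝ) (hKcont : Continuous K)
    (hK : ∀ x : ℝ, x ≠ 0 →
      K x = 48 * Real.cos x * (1 - 15 * (x ^ 2)⁻¹) * (π * x ^ 4)⁻¹
            - 144 * Real.sin x * (2 - 5 * (x ^ 2)⁻¹) * (π * x ^ 5)⁻¹) :
    Integrable K volume ∧
    (∀ t : ℝ,
      (∫ x : ℝ, Complex.exp (Complex.I * t * x) * (K x : ℂ) ∂volume)
        = if |t| ≤ 1 then (((1 - t ^ 2) ^ 3 : ℝ) : ℂ) else 0) ∧
    (∫ x : ℝ, K x ∂volume) = 1 := by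
  
  have hKint : Integrable K := integrable_of_eq_kernelFormula hKcont hK
  have hKF := ofReal_comp_eq_fourier_cubicBump hKcont hK
  have hFT (t : ℝ) : ∫ x : ℝ, Complex.exp (Complex.I * t * x) * (K x : ℂ) = cubicBump t := by
    have hFi : Integrable (𝓕 fun ξ => (cubicBump (2 * π * ξ) : ℂ)) := hKF ▸ hKint.ofReal
    simpa [← hKF] using integral_exp_I_mul_smul_fourier_comp_two_pi_mul
      (g := fun u => (cubicBump u : ℂ)) (by fun_prop) integrable_cubicBump.ofReal hFi t
  refine ⟨hKint, fun t => by rw [hFT, cubicBump_eq_ite]; split_ifs <;> simp, ?_⟩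
  simpa [integral_complex_ofReal, cubicBump] using hFT 0
end

section
/- Let X and ε be independent real random variables with E(ε) = 0, and let Y = Σ_{j=0}^{p} β_j X^j + ε for real coefficients β_0, …, β_p. Fix r ≥ 1 and assume E|ε|^r < ∞ and E|X|^{pr} < ∞. Writing ω_s = E(ε^s), one has ω_r = E(Y^r) − Σ_{s=0}^{r−1} Σ_{t_0 + ⋯ + t_p = r−s} (r! / (s! t_0! ⋯ t_p!)) · ω_s · β_0^{t_0} ⋯ β_p^{t_p} · E(X^{t_1 + 2t_2 + ⋯ + p t_p}), where the inner sum is over nonnegative integers t_0, …, t_p with t_0 + ⋯ + t_p = r − s. -/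
/-!
Expand `Y ^ r = (∑ j, β j X ^ j + ε) ^ r` by the binomial theorem in `ε` and the multinomial
theorem in the polynomial part, so that each term is a constant times `ε ^ s * X ^ k` with
`k = ∑ i, i * t i ≤ p * r`. The moment hypotheses make every such term integrable, and
independence factors its expectation as `E(ε ^ s) E(X ^ k)`. The term `s = r` is `E(ε ^ r)`
itself; moving the others to the other side gives the recursion.
-/

open MeasureTheory ProbabilityTheory Finset Nat

lemma integrable_pow_of_integrable_abs_pow_s14 {Ω : Type*} [MeasurableSpace Ω] {μ : Measure Ω}
    [IsFiniteMeasure μ] {f : Ω → ℝ} (hf : AEStronglyMeasurable f μ) {k n : ℕ} (hkn : k ≤ n)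
    (h : Integrable (fun ω => |f ω| ^ n) μ) :
    Integrable (fun ω => f ω ^ k) μ := by
  have hnorm := integrable_norm_pow_of_le hf hkn (by simpa only [Real.norm_eq_abs] using h)
  exact (integrable_norm_iff (hf.pow k)).mp (by simpa only [Pi.pow_apply, norm_pow] using hnorm)

lemma choose_mul_multinomial_eq_factorial_div {K ι : Type*} [Field K] [CharZero K] [Fintype ι]
    {r s : ℕ} (hs : s ≤ r) {t : ι → ℕ} (ht : ∑ i, t i = r - s) :
    (r.choose s * multinomial univ t : K) = r ! / (s ! * ∏ i, ((t i)! : K)) := by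
  rw [eq_div_iff (mul_ne_zero (mod_cast s.factorial_ne_zero)
    (prod_ne_zero_iff.mpr fun i _ => mod_cast (t i).factorial_ne_zero))]
  have hspec : (∏ i, (t i)!) * multinomial univ t = (r - s)! := by
    rw [multinomial_spec, ht]
  have hnat : r.choose s * multinomial univ t * (s ! * ∏ i, (t i)!) = r ! := by
    rw [← choose_mul_factorial_mul_factorial hs, ← hspec]
    ring
  exact_mod_cast hnat

lemma sum_index_mul_le_of_mem_antidiagonalTuple {p m : ℕ} {t : Fin (p + 1) → ℕ}
    (ht : t ∈ antidiagonalTuple (p + 1) m) :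
    ∑ i : Fin (p + 1), (i : ℕ) * t i ≤ p * m := by
  rw [mem_antidiagonalTuple] at ht
  calc ∑ i : Fin (p + 1), (i : ℕ) * t i
      ≤ ∑ i : Fin (p + 1), p * t i :=
        sum_le_sum fun i _ => Nat.mul_le_mul_right _ (Nat.le_of_lt_succ i.isLt)
    _ = p * m := by rw [← mul_sum, ht]

lemma sum_mul_pow_add_pow {K : Type*} [Field K] [CharZero K] (p : ℕ) (β : Fin (p + 1) → K)
    (x e : K) (r : ℕ) :
    ((∑ j : Fin (p + 1), β j * x ^ (j : ℕ)) + e) ^ r =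
      ∑ s ∈ range (r + 1), ∑ t ∈ antidiagonalTuple (p + 1) (r - s),
        (r ! : K) / (s ! * ∏ i, ((t i)! : K)) * e ^ s * (∏ i, β i ^ t i)
          * x ^ (∑ i : Fin (p + 1), (i : ℕ) * t i) := by
  rw [add_comm, add_pow]
  refine sum_congr rfl fun s hs => ?_
  rw [sum_pow_eq_sum_piAntidiag, piAntidiag_univ_fin_eq_antidiagonalTuple, mul_sum, sum_mul]
  refine sum_congr rfl fun t ht => ?_
  rw [mem_antidiagonalTuple] at ht
  have hprod : ∏ i, (β i * x ^ (i : ℕ)) ^ t i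
      = (∏ i, β i ^ t i) * x ^ (∑ i : Fin (p + 1), (i : ℕ) * t i) := by
    simp_rw [mul_pow, ← pow_mul, prod_mul_distrib, prod_pow_eq_pow_sum]
  rw [hprod, ← choose_mul_multinomial_eq_factorial_div (mem_range_succ_iff.mp hs) ht]
  ring

theorem integral_sum_mul_pow_add_pow_of_indepFun {Ω : Type*} [MeasurableSpace Ω]
    {μ : Measure Ω} [IsFiniteMeasure μ] (p : ℕ) (β : Fin (p + 1) → ℝ) {X ε : Ω → ℝ}
    (hX : AEMeasurable X μ) (hε : AEMeasurable ε μ) (hindep : IndepFun X ε μ) (r : ℕ)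
    (hεmom : Integrable (fun ω => |ε ω| ^ r) μ)
    (hXmom : Integrable (fun ω => |X ω| ^ (p * r)) μ) :
    ∫ ω, ((∑ j : Fin (p + 1), β j * X ω ^ (j : ℕ)) + ε ω) ^ r ∂μ =
      ∑ s ∈ range (r + 1), ∑ t ∈ antidiagonalTuple (p + 1) (r - s),
        (r ! : ℝ) / (s ! * ∏ i, ((t i)! : ℝ)) * (∫ ω, ε ω ^ s ∂μ) * (∏ i, β i ^ t i)
          * ∫ ω, X ω ^ (∑ i : Fin (p + 1), (i : ℕ) * t i) ∂μ := by
  have hmoments : ∀ s ∈ range (r + 1), ∀ t ∈ antidiagonalTuple (p + 1) (r - s),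
      let k := ∑ i : Fin (p + 1), (i : ℕ) * t i
      Integrable (fun ω => ε ω ^ s * X ω ^ k) μ ∧
        ∫ ω, ε ω ^ s * X ω ^ k ∂μ = (∫ ω, ε ω ^ s ∂μ) * ∫ ω, X ω ^ k ∂μ := by
    intro s hs t ht k
    have hεs := integrable_pow_of_integrable_abs_pow_s14 hε.aestronglyMeasurable
      (mem_range_succ_iff.mp hs) hεmom
    have hXk := integrable_pow_of_integrable_abs_pow_s14 hX.aestronglyMeasurable
      ((sum_index_mul_le_of_mem_antidiagonalTuple ht).trans
        (Nat.mul_le_mul_left p (Nat.sub_le r s))) hXmom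
    have hind : IndepFun (fun ω => ε ω ^ s) (fun ω => X ω ^ k) μ :=
      hindep.symm.comp (measurable_id.pow_const s) (measurable_id.pow_const k)
    exact ⟨hind.integrable_mul hεs hXk,
      hind.integral_fun_mul_eq_mul_integral hεs.aestronglyMeasurable hXk.aestronglyMeasurable⟩
  have hexpand : ∀ ω, ((∑ j : Fin (p + 1), β j * X ω ^ (j : ℕ)) + ε ω) ^ r =
      ∑ s ∈ range (r + 1), ∑ t ∈ antidiagonalTuple (p + 1) (r - s),
        ((r ! : ℝ) / (s ! * ∏ i, ((t i)! : ℝ)) * ∏ i, β i ^ t i)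
          * (ε ω ^ s * X ω ^ (∑ i : Fin (p + 1), (i : ℕ) * t i)) := fun ω => by
    rw [sum_mul_pow_add_pow]
    exact sum_congr rfl fun s _ => sum_congr rfl fun t _ => by ring
  simp_rw [hexpand]
  rw [integral_finsetSum _ fun s hs =>
    integrable_finsetSum _ fun t ht => ((hmoments s hs t ht).1.const_mul _)]
  refine sum_congr rfl fun s hs => ?_
  rw [integral_finsetSum _ fun t ht => ((hmoments s hs t ht).1.const_mul _)]
  refine sum_congr rfl fun t ht => ?_
  rw [integral_const_mul, (hmoments s hs t ht).2]
  ring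

theorem statement14_general
    {Ω : Type*} [MeasureSpace Ω] [IsProbabilityMeasure (ℙ : Measure Ω)]
    (p : ℕ) (β : Fin (p + 1) → ℝ) (X ε : Ω → ℝ)
    (hX : Measurable X) (hε : Measurable ε)
    (hindep : IndepFun X ε ℙ)
    (r : ℕ)
    (hεmom : Integrable (fun ω => |ε ω| ^ r) ℙ)
    (hXmom : Integrable (fun ω => |X ω| ^ (p * r)) ℙ)
    (Y : Ω → ℝ) (hY : ∀ ω, Y ω = (∑ j : Fin (p + 1), β j * (X ω) ^ (j : ℕ)) + ε ω) :
    (∫ ω, (ε ω) ^ r ∂ℙ)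
      = (∫ ω, (Y ω) ^ r ∂ℙ)
        - ∑ s ∈ Finset.range r,
            ∑ t ∈ Finset.Nat.antidiagonalTuple (p + 1) (r - s),
              ((r.factorial : ℝ) /
                  ((s.factorial : ℝ) * ∏ i : Fin (p + 1), ((t i).factorial : ℝ)))
                * (∫ ω, (ε ω) ^ s ∂ℙ)
                * (∏ i : Fin (p + 1), (β i) ^ (t i))
                * (∫ ω, (X ω) ^ (∑ i : Fin (p + 1), (i : ℕ) * t i) ∂ℙ) := by
  simp_rw [hY]
  rw [integral_sum_mul_pow_add_pow_of_indepFun p β hX.aemeasurable hε.aemeasurable hindep r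
    hεmom hXmom, sum_range_succ]
  rw [Nat.sub_self, antidiagonalTuple_zero_right, sum_singleton]
  simp [r.factorial_ne_zero]

/-- Let `X` and `ε` be independent with `E ε = 0`, and
`Y = ∑_{j=0}^p β_j X^j + ε`. For `r ≥ 1`, with `E|ε|^r < ∞` and `E|X|^{pr} < ∞`,
writing `ω_s = E(ε^s)`, one has
`ω_r = E(Y^r) - ∑_{s=0}^{r-1} ∑_{t_0+⋯+t_p = r-s} (r!/(s! t_0! ⋯ t_p!))
        ω_s β_0^{t_0} ⋯ β_p^{t_p} E(X^{t_1 + 2 t_2 + ⋯ + p t_p})`. -/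
theorem statement14
    {Ω : Type*} [MeasureSpace Ω] [IsProbabilityMeasure (ℙ : Measure Ω)]
    (p : ℕ) (β : Fin (p + 1) → ℝ) (X ε : Ω → ℝ)
    (hX : Measurable X) (hε : Measurable ε)
    (hindep : IndepFun X ε ℙ)
    (hεint : Integrable ε ℙ) (hmean : ∫ ω, ε ω ∂ℙ = 0)
    (r : ℕ) (hr : 1 ≤ r)
    (hεmom : Integrable (fun ω => |ε ω| ^ r) ℙ)
    (hXmom : Integrable (fun ω => |X ω| ^ (p * r)) ℙ)
    (Y : Ω → ℝ) (hY : ∀ ω, Y ω = (∑ j : Fin (p + 1), β j * (X ω) ^ (j : ℕ)) + ε ω) :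
    (∫ ω, (ε ω) ^ r ∂ℙ)
      = (∫ ω, (Y ω) ^ r ∂ℙ)
        - ∑ s ∈ Finset.range r,
            ∑ t ∈ Finset.Nat.antidiagonalTuple (p + 1) (r - s),
              ((r.factorial : ℝ) /
                  ((s.factorial : ℝ) * ∏ i : Fin (p + 1), ((t i).factorial : ℝ)))
                * (∫ ω, (ε ω) ^ s ∂ℙ)
                * (∏ i : Fin (p + 1), (β i) ^ (t i))
                * (∫ ω, (X ω) ^ (∑ i : Fin (p + 1), (i : ℕ) * t i) ∂ℙ) :=
  statement14_general p β X ε hX hε hindep r hεmom hXmom Y hY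
end
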